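/- Let Γ = G₁ *_A G₂ be an amalgamated free product with G₁, G₂ finitely generated, and let N ◁ Γ be a normal subgroup of finite index n. Set a = [A : A ∩ N] and kⱼ = [Gⱼ : Gⱼ ∩ N] for j = 1, 2. Then d(N) ≤ (n/k₁)·d(N ∩ G₁) + (n/k₂)·d(N ∩ G₂) + n/a − n/k₁ − n/k₂ + 1. -/

import Mathlib

/-- `d G` is the minimal number of generators of the group `G`. -/
noncomputable def d (G : Type*) [Group G] : ℕ :=
  sInf {n | ∃ S : Finset G, S.card = n ∧ Subgroup.closure (S : Set G) = ⊤}

/-!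
Let `Q = Γ ⧸ N` and let `Hᵢ`, `B` be the images of `Gᵢ`, `A` in `Q`. The quotient by `N` of the
Bass–Serre tree of `Γ` is the bipartite graph with vertex sets `Q ⧸ H₁`, `Q ⧸ H₂` and edge set
`Q ⧸ B`, the edge `xB` joining `xH₁` and `xH₂`; it is connected because `Γ` is generated by the
`Gᵢ`. Choose representatives of the vertices in `Γ` along a spanning tree. Then `N` is generated by
the conjugates, by the representatives of vertices of type `i`, of a generating set of `N ∩ Gᵢ`,
together with one element for each edge outside the tree. There are `n / kᵢ` vertices of type `i`
and `n / a` edges, hence `n / a - n / k₁ - n / k₂ + 1` edges outside the tree.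
-/

open Monoid PushoutI Subgroup

theorem d_eq_rank (G : Type*) [Group G] [Group.FG G] : d G = Group.rank G :=
  le_antisymm (Nat.sInf_le (Group.rank_spec G)) <|
    le_csInf ⟨_, Group.rank_spec G⟩ fun _ ⟨_, hcard, hS⟩ => hcard ▸ Group.rank_le hS

theorem Subgroup.exists_finset_card_eq_d_closure_eq {G : Type*} [Group G] (K : Subgroup G)
    [Group.FG K] : ∃ T : Finset G, T.card = d K ∧ closure (T : Set G) = K := by
  obtain ⟨S, hcard, hS⟩ := Group.rank_spec K
  refine ⟨S.map (Function.Embedding.subtype _), by rw [Finset.card_map, hcard, d_eq_rank], ?_⟩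
  rw [Finset.coe_map, Function.Embedding.coe_subtype, ← K.coe_subtype, ← MonoidHom.map_closure,
    hS, ← MonoidHom.range_eq_map, range_subtype]

theorem d_le_nat_card_of_closure_range_eq {G ι : Type*} [Group G] [Finite ι] {f : ι → G}
    {K : Subgroup G} (hf : closure (Set.range f) = K) : d K ≤ Nat.card ι := by
  subst hf
  rw [d_eq_rank]
  exact (rank_closure_finite_le_nat_card _).trans (Finite.card_range_le f)

theorem SimpleGraph.Reachable.exists_adj_dist_lt {V : Type*} {Γ : SimpleGraph V} {u w : V}
    (h : Γ.Reachable w u) (hne : w ≠ u) : ∃ v, Γ.Adj w v ∧ Γ.dist v u < Γ.dist w u := by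
  obtain ⟨p, hp⟩ := h.exists_walk_length_eq_dist
  cases p with
  | nil => exact absurd rfl hne
  | cons hadj q =>
    refine ⟨_, hadj, ?_⟩
    have := Γ.dist_le q
    rw [SimpleGraph.Walk.length_cons] at hp
    omega

theorem Monoid.PushoutI.induction_right {ι : Type*} [Nonempty ι] {G : ι → Type*}
    [∀ i, Monoid (G i)] {H : Type*} [Monoid H] {φ : ∀ i, H →* G i} {motive : PushoutI φ → Prop}
    (one : motive 1) (mul_of : ∀ x i (g : G i), motive x → motive (x * of i g)) (x : PushoutI φ) :
    motive x := by
  suffices ∀ y, motive y → motive (y * x) by simpa using this 1 one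
  induction x using PushoutI.induction_on with
  | of i g => exact fun y => mul_of y i g
  | base a =>
    intro y hy
    rw [← of_apply_eq_base φ (Classical.arbitrary ι)]
    exact mul_of y _ _ hy
  | mul x x' hx hx' => exact fun y hy => mul_assoc y x x' ▸ hx' _ (hx y hy)

theorem cast_div_eq_of_mul_eq {c k n : ℕ} (hn : n ≠ 0) (h : c * k = n) : (n : ℝ) / k = c := by
  have hk : (k : ℝ) ≠ 0 := by exact_mod_cast right_ne_zero_of_mul (h ▸ hn)
  rw [← h, Nat.cast_mul, mul_div_cancel_right₀ _ hk]

theorem card_quotient_range_mul_index_comap {H Γ : Type*} [Group H] [Group Γ] (N : Subgroup Γ)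
    [N.Normal] (f : H →* Γ) :
    Nat.card ((Γ ⧸ N) ⧸ ((QuotientGroup.mk' N).comp f).range) * (N.comap f).index = N.index := by
  have hker : N.comap f = ((QuotientGroup.mk' N).comp f).ker := by
    rw [← MonoidHom.comap_ker, QuotientGroup.ker_mk']
  rw [hker, index_ker]
  exact (card_eq_card_quotient_mul_card_subgroup _).symm

noncomputable section

namespace QuotientGraph

variable {A : Type*} [Group A] {G : Bool → Type*} [∀ i, Group (G i)] {φ : ∀ i, A →* G i}
  (N : Subgroup (PushoutI φ)) [N.Normal]

local notation "Q" => PushoutI φ ⧸ N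

def vertexGroup (i : Bool) : Subgroup Q := ((QuotientGroup.mk' N).comp (of i)).range

def edgeGroup : Subgroup Q := ((QuotientGroup.mk' N).comp (base φ)).range

theorem edgeGroup_le_vertexGroup (i : Bool) : edgeGroup N ≤ vertexGroup N i := by
  rintro _ ⟨a, rfl⟩
  exact ⟨φ i a, by simp [of_apply_eq_base]⟩

abbrev Vertex := Σ i, Q ⧸ vertexGroup N i

abbrev Edge := Q ⧸ edgeGroup N

def vertex (i : Bool) (x : Q) : Vertex N := ⟨i, x⟩

def root : Vertex N := vertex N true 1

def edgeEnd (i : Bool) (e : Edge N) : Vertex N := vertex N i e.out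

theorem vertex_mul_of_mem {i : Bool} (x : Q) {y : Q} (hy : y ∈ vertexGroup N i) :
    vertex N i (x * y) = vertex N i x := by
  rw [vertex, vertex, QuotientGroup.mk_mul_of_mem x hy]

theorem vertex_mul_of (i : Bool) (γ : PushoutI φ) (g : G i) :
    vertex N i (γ * of i g : PushoutI φ) = vertex N i γ :=
  vertex_mul_of_mem N (γ : Q) ⟨g, rfl⟩

theorem edgeEnd_mk (i : Bool) (x : Q) : edgeEnd N i (x : Edge N) = vertex N i x := by
  obtain ⟨b, hb⟩ := QuotientGroup.mk_out_eq_mul (edgeGroup N) x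
  rw [edgeEnd, hb, vertex_mul_of_mem N x (edgeGroup_le_vertexGroup N i b.2)]

def graph : SimpleGraph (Vertex N) where
  Adj u w := ∃ i x, u = vertex N i x ∧ w = vertex N (!i) x
  symm := ⟨by
    rintro _ _ ⟨i, x, rfl, rfl⟩
    exact ⟨!i, x, rfl, by rw [Bool.not_not]⟩⟩
  loopless := ⟨fun _ ⟨i, _, hu, hw⟩ => Bool.not_ne_self i (congrArg Sigma.fst (hw.symm.trans hu))⟩

theorem reachable_root (w : Vertex N) : (graph N).Reachable w (root N) := by
  suffices ∀ (γ : PushoutI φ) i, (graph N).Reachable (root N) (vertex N i γ) by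
    obtain ⟨i, v⟩ := w
    obtain ⟨x, rfl⟩ := QuotientGroup.mk_surjective v
    obtain ⟨γ, rfl⟩ := QuotientGroup.mk_surjective x
    exact (this γ i).symm
  intro γ
  induction γ using PushoutI.induction_right with
  | one =>
    have hadj : (graph N).Adj (root N) (vertex N false 1) := ⟨true, 1, rfl, rfl⟩
    rintro (_ | _)
    · exact hadj.reachable
    · rfl
  | mul_of γ j g ih =>
    have hadj : (graph N).Adj (vertex N j (γ * of j g : PushoutI φ))
        (vertex N (!j) (γ * of j g : PushoutI φ)) := ⟨j, _, rfl, rfl⟩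
    intro i
    rcases Bool.eq_or_eq_not i j with rfl | rfl
    · rw [vertex_mul_of]; exact ih i
    · exact (vertex_mul_of N j γ g ▸ ih j).trans hadj.reachable

def depth (w : Vertex N) : ℕ := (graph N).dist w (root N)

theorem exists_parentEdge {w : Vertex N} (hw : w ≠ root N) :
    ∃ e : Edge N, edgeEnd N w.1 e = w ∧ depth N (edgeEnd N (!w.1) e) < depth N w := by
  obtain ⟨u, ⟨i, x, rfl, rfl⟩, hlt⟩ := (reachable_root N w).exists_adj_dist_lt hw
  exact ⟨x, edgeEnd_mk N i x, by rwa [edgeEnd_mk]⟩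

def parentEdge {w : Vertex N} (hw : w ≠ root N) : Edge N := (exists_parentEdge N hw).choose

theorem edgeEnd_parentEdge {w : Vertex N} (hw : w ≠ root N) :
    edgeEnd N w.1 (parentEdge N hw) = w :=
  (exists_parentEdge N hw).choose_spec.1

theorem depth_parent_lt {w : Vertex N} (hw : w ≠ root N) :
    depth N (edgeEnd N (!w.1) (parentEdge N hw)) < depth N w :=
  (exists_parentEdge N hw).choose_spec.2

open scoped Classical in
def shift (i : Bool) (γ : PushoutI φ) (x : Q) : G i :=
  if h : ∃ g : G i, ((γ * of i g : PushoutI φ) : Q) = x then h.choose else 1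

theorem coe_mul_of_shift {i : Bool} {γ : PushoutI φ} {x : Q} (h : vertex N i γ = vertex N i x) :
    ((γ * of i (shift N i γ x) : PushoutI φ) : Q) = x := by
  have hex : ∃ g : G i, ((γ * of i g : PushoutI φ) : Q) = x := by
    obtain ⟨g, hg⟩ := QuotientGroup.eq.mp (eq_of_heq (Sigma.mk.inj h).2)
    refine ⟨g, ?_⟩
    simp only [MonoidHom.comp_apply, QuotientGroup.mk'_apply] at hg
    rw [QuotientGroup.mk_mul, hg, mul_inv_cancel_left]
  rw [shift, dif_pos hex]
  exact hex.choose_spec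

open scoped Classical in
/-- Vertex representatives chosen along a breadth-first spanning tree. -/
def rep : Vertex N → PushoutI φ :=
  (measure (depth N)).wf.fix fun w rep =>
    if hw : w = root N then 1 else
      let r := rep (edgeEnd N (!w.1) (parentEdge N hw)) (depth_parent_lt N hw)
      r * of (!w.1) (shift N (!w.1) r (parentEdge N hw).out)

def edgeRep (i : Bool) (e : Edge N) : PushoutI φ :=
  rep N (edgeEnd N i e) * of i (shift N i (rep N (edgeEnd N i e)) e.out)

open scoped Classical in
theorem rep_eq (w : Vertex N) :
    rep N w = if hw : w = root N then 1 else edgeRep N (!w.1) (parentEdge N hw) := by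
  rw [rep, WellFounded.fix_eq]
  rfl

theorem rep_root : rep N (root N) = 1 := by
  rw [rep_eq, dif_pos rfl]

theorem rep_of_ne_root {w : Vertex N} (hw : w ≠ root N) :
    rep N w = edgeRep N (!w.1) (parentEdge N hw) := by
  rw [rep_eq, dif_neg hw]

theorem coe_edgeRep_of (i : Bool) (e : Edge N)
    (h : vertex N i (rep N (edgeEnd N i e)) = edgeEnd N i e) : (edgeRep N i e : Q) = e.out :=
  coe_mul_of_shift N h

theorem vertex_rep (w : Vertex N) : vertex N w.1 (rep N w) = w := by
  induction w using (measure (depth N)).wf.induction with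
  | _ w ih =>
  by_cases hw : w = root N
  · subst hw
    rw [rep_root]
    rfl
  · rw [rep_of_ne_root N hw, coe_edgeRep_of N (!w.1) (parentEdge N hw)
      (ih (edgeEnd N (!w.1) (parentEdge N hw)) (depth_parent_lt N hw))]
    exact edgeEnd_parentEdge N hw

theorem coe_edgeRep (i : Bool) (e : Edge N) : (edgeRep N i e : Q) = e.out :=
  coe_edgeRep_of N i e (vertex_rep N (edgeEnd N i e))

def edgeGen (e : Edge N) : PushoutI φ := edgeRep N true e * (edgeRep N false e)⁻¹

theorem edgeGen_mem (e : Edge N) : edgeGen N e ∈ N := by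
  rw [← QuotientGroup.eq_one_iff, edgeGen, QuotientGroup.mk_mul, QuotientGroup.mk_inv,
    coe_edgeRep, coe_edgeRep, mul_inv_cancel]

theorem edgeRep_mul_inv_mem_iff {H : Subgroup (PushoutI φ)} (i : Bool) (e : Edge N) :
    edgeRep N i e * (edgeRep N (!i) e)⁻¹ ∈ H ↔ edgeGen N e ∈ H := by
  cases i
  · rw [← inv_mem_iff, edgeGen, mul_inv_rev, inv_inv]
    rfl
  · rfl

theorem exists_edgeRep_parentEdge {w : Vertex N} (hw : w ≠ root N) :
    ∃ g : G w.1, of w.1 g ∈ N ∧ edgeRep N w.1 (parentEdge N hw) = rep N w * of w.1 g := by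
  refine ⟨shift N w.1 (rep N w) (parentEdge N hw).out, ?_, by
    rw [edgeRep, edgeEnd_parentEdge]⟩
  have h := (coe_edgeRep N w.1 (parentEdge N hw)).trans
    (rep_of_ne_root N hw ▸ coe_edgeRep N (!w.1) (parentEdge N hw)).symm
  rwa [edgeRep, edgeEnd_parentEdge, QuotientGroup.mk_mul, mul_eq_left,
    QuotientGroup.eq_one_iff] at h

-- The edge `e` over `rep w * of i h` has `w` as its end of type `i`, so `edgeRep i e` and
-- `rep w * of i h` differ, on the right, by an element of `Gᵢ` whose image in `Q` lies in `B`.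
theorem exists_rep_mul_of_eq_conj_mul_edgeRep_mul_base (w : Vertex N) (h : G w.1) :
    ∃ g : G w.1, of w.1 g ∈ N ∧ ∃ a : A, rep N w * of w.1 h =
      rep N w * of w.1 g * (rep N w)⁻¹ *
        edgeRep N w.1 (((rep N w * of w.1 h : PushoutI φ) : Q) : Edge N) * base φ a := by
  set x : Q := ((rep N w * of w.1 h : PushoutI φ) : Q)
  have hend : edgeEnd N w.1 x = w := by rw [edgeEnd_mk, vertex_mul_of]; exact vertex_rep N w
  obtain ⟨b, hb⟩ := QuotientGroup.mk_out_eq_mul (edgeGroup N) x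
  obtain ⟨a, ha⟩ := b.2
  set c := shift N w.1 (rep N w) (x : Edge N).out
  have hc : edgeRep N w.1 x = rep N w * of w.1 c := by rw [edgeRep, hend]
  have hconj : rep N w * of w.1 (h * φ w.1 a * c⁻¹) * (rep N w)⁻¹ ∈ N := by
    have : rep N w * of w.1 (h * φ w.1 a * c⁻¹) * (rep N w)⁻¹ =
        rep N w * of w.1 h * base φ a * (edgeRep N w.1 x)⁻¹ := by
      rw [hc, ← of_apply_eq_base φ w.1]
      simp only [map_mul, map_inv]
      group
    rw [this, ← QuotientGroup.eq_one_iff, QuotientGroup.mk_mul, QuotientGroup.mk_mul,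
      QuotientGroup.mk_inv, coe_edgeRep, hb, ← ha]
    exact mul_inv_cancel _
  refine ⟨h * φ w.1 a * c⁻¹, ?_, a⁻¹, ?_⟩
  · simpa [mul_assoc] using (inferInstance : N.Normal).conj_mem' _ hconj (rep N w)
  · rw [hc, ← of_apply_eq_base φ w.1]
    simp only [map_mul, map_inv]
    group

def treeEdges : Set (Edge N) := Set.range fun w : {w // w ≠ root N} => parentEdge N w.2

theorem parentEdge_injective :
    Function.Injective fun w : {w // w ≠ root N} => parentEdge N w.2 := by
  rintro ⟨w, hw⟩ ⟨w', hw'⟩ (he : parentEdge N hw = parentEdge N hw')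
  have hend := edgeEnd_parentEdge N hw
  have hend' := edgeEnd_parentEdge N hw'
  have hlt := depth_parent_lt N hw
  have hlt' := depth_parent_lt N hw'
  rw [he] at hend hlt
  rcases Bool.eq_or_eq_not w.1 w'.1 with hs | hs
  · exact Subtype.ext (hend.symm.trans (hs ▸ hend'))
  · rw [hs, Bool.not_not, hend'] at hlt
    rw [← hs, hend] at hlt'
    omega

section Generation

variable (T : ∀ i, Set (G i))

/-- Tree edges contribute no generator: theirs are conjugates of elements of `N ∩ Gᵢ`. -/
def generator : (Σ i, (Q ⧸ vertexGroup N i) × T i) ⊕ ↥(treeEdges N)ᶜ → PushoutI φ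
  | .inl ⟨i, v, t⟩ => rep N ⟨i, v⟩ * of i t * (rep N ⟨i, v⟩)⁻¹
  | .inr e => edgeGen N e

local notation "S" => closure (Set.range (generator N T))

def Factors (i : Bool) (γ : PushoutI φ) : Prop :=
  ∃ s ∈ S, ∃ (v : Q ⧸ vertexGroup N i) (h : G i), γ = s * rep N ⟨i, v⟩ * of i h

theorem Factors.mul_of {i : Bool} {γ : PushoutI φ} (hγ : Factors N T i γ) (g : G i) :
    Factors N T i (γ * of i g) := by
  obtain ⟨s, hs, v, h, rfl⟩ := hγ
  exact ⟨s, hs, v, h * g, by rw [map_mul, mul_assoc]⟩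

variable {T} (hT : ∀ i, closure (T i) = N.comap (of i))
include hT

theorem conj_rep_mem (w : Vertex N) {g : G w.1} (hg : of w.1 g ∈ N) :
    rep N w * of w.1 g * (rep N w)⁻¹ ∈ S := by
  let conj := (MulAut.conj (rep N w)).toMonoidHom.comp (of w.1)
  have : closure (T w.1) ≤ (S).comap conj :=
    closure_le _ |>.mpr fun t ht => subset_closure ⟨.inl ⟨w.1, w.2, t, ht⟩, rfl⟩
  exact this (hT w.1 ▸ hg)

theorem edgeGen_mem_closure (e : Edge N) : edgeGen N e ∈ S := by
  by_cases he : e ∈ treeEdges N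
  · obtain ⟨⟨w, hw⟩, rfl⟩ := he
    obtain ⟨g, hg, hrep⟩ := exists_edgeRep_parentEdge N hw
    rw [← edgeRep_mul_inv_mem_iff N w.1, hrep, ← rep_of_ne_root N hw]
    exact conj_rep_mem N hT w hg
  · exact subset_closure ⟨.inr ⟨e, he⟩, rfl⟩

theorem Factors.cross {i : Bool} {γ : PushoutI φ} (hγ : Factors N T i γ) :
    Factors N T (!i) γ := by
  obtain ⟨s, hs, v, h, rfl⟩ := hγ
  obtain ⟨g, hg, a, hfac⟩ := exists_rep_mul_of_eq_conj_mul_edgeRep_mul_base N ⟨i, v⟩ h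
  set e : Edge N := (((rep N ⟨i, v⟩ * of i h : PushoutI φ) : Q) : Edge N)
  refine ⟨s * (rep N ⟨i, v⟩ * of i g * (rep N ⟨i, v⟩)⁻¹) * (edgeRep N i e * (edgeRep N (!i) e)⁻¹),
    mul_mem (mul_mem hs (conj_rep_mem N hT ⟨i, v⟩ hg))
      ((edgeRep_mul_inv_mem_iff N i e).mpr (edgeGen_mem_closure N hT e)),
    e.out, shift N (!i) (rep N (edgeEnd N (!i) e)) e.out * φ (!i) a, ?_⟩
  have hother : edgeRep N (!i) e =
      rep N ⟨!i, e.out⟩ * of (!i) (shift N (!i) (rep N (edgeEnd N (!i) e)) e.out) := rfl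
  rw [mul_assoc s, hfac, map_mul, of_apply_eq_base, hother]
  group

theorem Factors.any_side {i : Bool} {γ : PushoutI φ} (hγ : Factors N T i γ) (j : Bool) :
    Factors N T j γ := by
  rcases Bool.eq_or_eq_not j i with rfl | rfl
  exacts [hγ, hγ.cross N hT]

theorem factors (γ : PushoutI φ) (i : Bool) : Factors N T i γ := by
  induction γ using PushoutI.induction_right generalizing i with
  | one =>
    have : Factors N T true 1 := ⟨1, one_mem _, (1 : Q), 1, by
      rw [show (⟨true, (1 : Q)⟩ : Vertex N) = root N from rfl, rep_root]; simp⟩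
    exact this.any_side N hT i
  | mul_of γ j g ih => exact ((ih j).mul_of N T g).any_side N hT i

theorem closure_range_generator_le : S ≤ N := by
  rw [closure_le]
  rintro _ ⟨⟨i, v, t, ht⟩ | ⟨e, -⟩, rfl⟩
  · have : of i t ∈ N := by
      rw [← mem_comap, ← hT i]
      exact subset_closure ht
    exact (inferInstance : N.Normal).conj_mem _ this _
  · exact edgeGen_mem N e

theorem closure_range_generator : S = N := by
  refine le_antisymm (closure_range_generator_le N hT) fun γ hγ => ?_
  obtain ⟨s, hs, v, h, rfl⟩ := factors N hT γ true
  have hrep : rep N ⟨true, v⟩ * of true h ∈ N := by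
    simpa [mul_assoc] using N.mul_mem (N.inv_mem (closure_range_generator_le N hT hs)) hγ
  have hv : (⟨true, v⟩ : Vertex N) = root N := by
    rw [← vertex_rep N ⟨true, v⟩, ← vertex_mul_of N true _ h, (QuotientGroup.eq_one_iff _).mpr hrep]
    rfl
  rw [hv, rep_root, one_mul] at hrep
  rw [hv, rep_root, mul_one]
  have := conj_rep_mem N hT (root N) hrep
  rw [rep_root, one_mul, inv_one, mul_one] at this
  exact mul_mem hs this

end Generation

theorem card_vertex_mul_index (i : Bool) :
    Nat.card (Q ⧸ vertexGroup N i) * (N.comap (of i)).index = N.index :=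
  card_quotient_range_mul_index_comap N (of i)

theorem card_edge_mul_index : Nat.card (Edge N) * (N.comap (base φ)).index = N.index :=
  card_quotient_range_mul_index_comap N (base φ)

variable [N.FiniteIndex]

theorem card_compl_treeEdges_add_card_vertex :
    Nat.card ↥(treeEdges N)ᶜ + Nat.card (Vertex N) = Nat.card (Edge N) + 1 := by
  classical
  have htree : Nat.card (treeEdges N) + 1 = Nat.card (Vertex N) := by
    rw [treeEdges, Nat.card_range_of_injective (parentEdge_injective N), ← Finite.card_option,
      Nat.card_congr (Equiv.optionSubtypeNe (root N))]
  rw [← htree, Nat.card_coe_set_eq, Nat.card_coe_set_eq, ← Set.ncard_add_ncard_compl (treeEdges N)]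
  ring

theorem d_add_card_vertex_le (T : ∀ i, Finset (G i))
    (hT : ∀ i, closure (T i : Set (G i)) = N.comap (of i)) :
    d N + (Nat.card (Q ⧸ vertexGroup N true) + Nat.card (Q ⧸ vertexGroup N false)) ≤
      Nat.card (Q ⧸ vertexGroup N true) * (T true).card +
        Nat.card (Q ⧸ vertexGroup N false) * (T false).card + Nat.card (Edge N) + 1 := by
  have hd := d_le_nat_card_of_closure_range_eq (closure_range_generator N hT)
  have hcount := card_compl_treeEdges_add_card_vertex N
  simp only [Nat.card_sum, Nat.card_sigma, Fintype.sum_bool, Nat.card_prod, Finset.coe_sort_coe,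
    Nat.card_eq_finsetCard] at hd hcount
  omega

end QuotientGraph

end

open Monoid in
theorem rank_bound_amalgamated_product_general {A : Type*} [Group A] {G : Bool → Type*}
    [∀ i, Group (G i)] [∀ i, Group.FG (G i)]
    (φ : ∀ i, A →* G i)
    (N : Subgroup (Monoid.PushoutI φ)) (hNnorm : N.Normal) (hNfi : N.FiniteIndex)
    (n a k₁ k₂ : ℕ) (hn : N.index = n)
    (ha : (N.comap (Monoid.PushoutI.base φ)).index = a)
    (hk₁ : (N.comap (Monoid.PushoutI.of (φ := φ) true)).index = k₁)
    (hk₂ : (N.comap (Monoid.PushoutI.of (φ := φ) false)).index = k₂) :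
    (d N : ℝ) ≤ ((n : ℝ) / k₁) * d (N.comap (Monoid.PushoutI.of (φ := φ) true)) +
      ((n : ℝ) / k₂) * d (N.comap (Monoid.PushoutI.of (φ := φ) false)) +
      (n : ℝ) / a - (n : ℝ) / k₁ - (n : ℝ) / k₂ + 1 := by
  have hn0 : n ≠ 0 := hn ▸ hNfi.index_ne_zero
  have hV := QuotientGraph.card_vertex_mul_index N
  have hFG (i : Bool) : Group.FG (N.comap (of (φ := φ) i)) :=
    have : (N.comap (of i)).FiniteIndex := ⟨right_ne_zero_of_mul (hV i ▸ hNfi.index_ne_zero)⟩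
    inferInstance
  choose T hTcard hT using fun i => (N.comap (of (φ := φ) i)).exists_finset_card_eq_d_closure_eq
  have hbound := QuotientGraph.d_add_card_vertex_le N T hT
  rw [hTcard, hTcard] at hbound
  rw [cast_div_eq_of_mul_eq hn0 (hk₁ ▸ hn ▸ hV true),
    cast_div_eq_of_mul_eq hn0 (hk₂ ▸ hn ▸ hV false),
    cast_div_eq_of_mul_eq hn0 (ha ▸ hn ▸ QuotientGraph.card_edge_mul_index N)]
  have := (Nat.cast_le (α := ℝ)).mpr hbound
  push_cast at this
  linarith

open Monoid in
/-- Let `Γ = G₁ *_A G₂` (the pushout of two injective maps `A →* Gᵢ`, `i : Bool`),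
with `G₁, G₂` finitely generated, and let `N ◁ Γ` have finite index `n`. With
`a = [A : A ∩ N]` and `kⱼ = [Gⱼ : Gⱼ ∩ N]`, one has
`d(N) ≤ (n/k₁)·d(N ∩ G₁) + (n/k₂)·d(N ∩ G₂) + n/a − n/k₁ − n/k₂ + 1`. -/
theorem rank_bound_amalgamated_product {A : Type*} [Group A] {G : Bool → Type*}
    [∀ i, Group (G i)] [∀ i, Group.FG (G i)]
    (φ : ∀ i, A →* G i) (hφ : ∀ i, Function.Injective (φ i))
    (N : Subgroup (Monoid.PushoutI φ)) (hNnorm : N.Normal) (hNfi : N.FiniteIndex)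
    (n a k₁ k₂ : ℕ) (hn : N.index = n)
    (ha : (N.comap (Monoid.PushoutI.base φ)).index = a)
    (hk₁ : (N.comap (Monoid.PushoutI.of (φ := φ) true)).index = k₁)
    (hk₂ : (N.comap (Monoid.PushoutI.of (φ := φ) false)).index = k₂) :
    (d N : ℝ) ≤ ((n : ℝ) / k₁) * d (N.comap (Monoid.PushoutI.of (φ := φ) true)) +
      ((n : ℝ) / k₂) * d (N.comap (Monoid.PushoutI.of (φ := φ) false)) +
      (n : ℝ) / a - (n : ℝ) / k₁ - (n : ℝ) / k₂ + 1 :=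
  rank_bound_amalgamated_product_general φ N hNnorm hNfi n a k₁ k₂ hn ha hk₁ hk₂
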